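/- For every ordinal γ, the class 𝔇_γ is closed under finite unions of metric families: if ℱ and ℱ' are metric families lying in 𝔇_γ, then the union family ℱ ∪ ℱ' also lies in 𝔇_γ. -/

import Mathlib

open scoped ENNReal

universe u

namespace Paper

/-- A metric family: a (indexed) set of metric spaces. -/
structure MetricFamily : Type (u + 1) where
  ι : Type u
  carrier : ι → Type u
  [inst : ∀ i, EMetricSpace (carrier i)]

attribute [instance] MetricFamily.inst

/-- The distance between two subsets of a metric space. -/
noncomputable def eSetDist {X : Type u} [EMetricSpace X] (P Q : Set X) : ℝ≥0∞ :=
  ⨅ p ∈ P, EMetric.infEdist p Q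

/-- The open `r`-neighborhood of a subset of a metric space. -/
def ENbhd {X : Type u} [EMetricSpace X] (r : ℝ≥0∞) (Z : Set X) : Set X :=
  {y | EMetric.infEdist y Z < r}

/-- A uniformly bounded metric family: there is a common (finite) bound for the diameters
of all of its members. -/
def UniformlyBounded : Set MetricFamily.{u} :=
  {F | ∃ R : ℝ≥0∞, R ≠ ⊤ ∧ ∀ i : F.ι, EMetric.diam (Set.univ : Set (F.carrier i)) < R}

/-- A metric family `F` decomposes over a class `D` of metric families: for every `r > 0`,
every member decomposes as a union `U ∪ V`, where `U` and `V` admit `r`-disjoint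
decompositions into pieces which form metric families belonging to `D`. -/
def Decomposes (F : MetricFamily.{u}) (D : Set MetricFamily.{u}) : Prop :=
  ∀ r : ℝ, 0 < r →
    ∃ (U V : ∀ α : F.ι, Set (F.carrier α))
      (I J : F.ι → Type u)
      (Us : ∀ α, I α → Set (F.carrier α)) (Vs : ∀ α, J α → Set (F.carrier α)),
      (∀ α, U α ∪ V α = Set.univ) ∧
      (∀ α, (⋃ i, Us α i) = U α) ∧ (∀ α, (⋃ j, Vs α j) = V α) ∧
      (∀ α (i i' : I α), i ≠ i' → ENNReal.ofReal r < eSetDist (Us α i) (Us α i')) ∧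
      (∀ α (j j' : J α), j ≠ j' → ENNReal.ofReal r < eSetDist (Vs α j) (Vs α j')) ∧
      (MetricFamily.mk ((α : F.ι) × I α) (fun p => ↥(Us p.1 p.2)) ∈ D) ∧
      (MetricFamily.mk ((α : F.ι) × J α) (fun p => ↥(Vs p.1 p.2)) ∈ D)

/-- The decomposition complexity classes `𝔇_γ`, defined by transfinite recursion:
`𝔇₀ = 𝔅` is the class of uniformly bounded families, `𝔇_{γ+1}` is the class of families
decomposing over `𝔇_γ`, and `𝔇_γ = ⋃_{β<γ} 𝔇_β` at limit ordinals. -/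
noncomputable def Dclass : Ordinal.{u} → Set MetricFamily.{u} := fun γ =>
  Ordinal.limitRecOn γ UniformlyBounded
    (fun _ D => {F | Decomposes F D})
    (fun o _ ih => {F | ∃ (o' : Ordinal.{u}) (h : o' < o), F ∈ ih o' h})

/-- The metric family associated to a family of subspaces of the metric space `X`. -/
def famOf (X : Type u) [EMetricSpace X] {ι : Type u} (Z : ι → Set X) :
    MetricFamily.{u} :=
  MetricFamily.mk ι (fun i => ↥(Z i))

end Paper

open Paper

namespace Paper

/-- The union of two metric families. -/
def MetricFamily.union (F G : MetricFamily.{u}) : MetricFamily.{u} where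
  ι := F.ι ⊕ G.ι
  carrier := Sum.elim F.carrier G.carrier
  inst i := by cases i with
    | inl a => exact F.inst a
    | inr b => exact G.inst b

end Paper


namespace Paper

/-! ### Auxiliary material for statement12 -/

lemma Dclass_zero : Dclass.{u} 0 = UniformlyBounded := by
  simp [Dclass]

lemma Dclass_succ (o : Ordinal.{u}) :
    Dclass.{u} (Order.succ o) = {F | Decomposes F (Dclass o)} := by
  simp only [Dclass, Ordinal.limitRecOn_succ]

lemma Dclass_limit (o : Ordinal.{u}) (h : Order.IsSuccLimit o) :
    Dclass.{u} o = {F | ∃ (o' : Ordinal.{u}) (_ : o' < o), F ∈ Dclass o'} := by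
  conv_lhs => rw [Dclass, Ordinal.limitRecOn_limit _ _ _ _ h]
  rfl

/-- The isometry between `univ` (as a subspace) and the whole space. -/
def univIso (X : Type u) [EMetricSpace X] : ↥(Set.univ : Set X) ≃ᵢ X :=
  ⟨Equiv.Set.univ X, fun _ _ => rfl⟩

/-- Restriction of an isometric equivalence to the preimage of a set. -/
def setPreimageIso {X Y : Type u} [EMetricSpace X] [EMetricSpace Y]
    (φ : X ≃ᵢ Y) (S : Set Y) : ↥(⇑φ ⁻¹' S) ≃ᵢ ↥S :=
  ⟨φ.toEquiv.subtypeEquiv (fun _ => Iff.rfl), fun a b => φ.isometry a.1 b.1⟩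

lemma eSetDist_preimage {X Y : Type u} [EMetricSpace X] [EMetricSpace Y] (φ : X ≃ᵢ Y)
    (P Q : Set Y) : eSetDist (⇑φ ⁻¹' P) (⇑φ ⁻¹' Q) = eSetDist P Q := by
  have hQ : ⇑φ ⁻¹' Q = ⇑φ.symm '' Q := by
    ext x; simp only [Set.mem_preimage, Set.mem_image]
    constructor
    · intro h; exact ⟨φ x, h, by simp⟩
    · rintro ⟨y, hy, rfl⟩; simpa using hy
  have hP : ⇑φ ⁻¹' P = ⇑φ.symm '' P := by
    ext x; simp only [Set.mem_preimage, Set.mem_image]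
    constructor
    · intro h; exact ⟨φ x, h, by simp⟩
    · rintro ⟨y, hy, rfl⟩; simpa using hy
  have h1 : ∀ x : X, EMetric.infEdist x (⇑φ ⁻¹' Q) = EMetric.infEdist (φ x) Q := by
    intro x
    rw [hQ]
    have := EMetric.infEdist_image (x := φ x) (t := Q) φ.symm.isometry
    simp at this; exact this
  unfold eSetDist
  rw [hP, iInf_image]
  simp only [h1]
  simp

/-- The distributivity equivalence between a sigma over a sum and a sum of sigmas. -/
def sumSigmaEquiv {A B : Type u} (I : A ⊕ B → Type u) :
    (Σ s : A ⊕ B, I s) ≃ (Σ a : A, I (Sum.inl a)) ⊕ (Σ b : B, I (Sum.inr b)) where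
  toFun p := match p with
    | ⟨Sum.inl a, i⟩ => Sum.inl ⟨a, i⟩
    | ⟨Sum.inr b, j⟩ => Sum.inr ⟨b, j⟩
  invFun q := match q with
    | Sum.inl ⟨a, i⟩ => ⟨Sum.inl a, i⟩
    | Sum.inr ⟨b, j⟩ => ⟨Sum.inr b, j⟩
  left_inv p := by rcases p with ⟨s, i⟩; cases s <;> rfl
  right_inv q := by rcases q with ⟨a, i⟩ | ⟨b, j⟩ <;> rfl

/-- `Dclass γ` is invariant under isomorphism of metric families. -/
theorem Dclass_congr : ∀ γ : Ordinal.{u}, ∀ F : MetricFamily.{u}, F ∈ Dclass γ →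
    ∀ (G : MetricFamily.{u}) (e : G.ι ≃ F.ι)
    (φ : ∀ i : G.ι, G.carrier i ≃ᵢ F.carrier (e i)), G ∈ Dclass γ := by
  intro γ
  induction γ using Ordinal.induction with
  | _ γ IH =>
  intro F hF G e φ
  rcases Ordinal.zero_or_succ_or_isSuccLimit γ with rfl | ⟨o, rfl⟩ | hlim
  · rw [Dclass_zero] at hF ⊢
    obtain ⟨R, hR, hd⟩ := hF
    refine ⟨R, hR, fun i => ?_⟩
    rw [show EMetric.diam (Set.univ : Set (G.carrier i)) = EMetric.diam (Set.univ : Set (F.carrier (e i))) from (φ i).ediam_univ]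
    exact hd (e i)
  · rw [Dclass_succ] at hF ⊢
    intro r hr
    obtain ⟨U, V, I, J, Us, Vs, hUV, hU, hV, hsU, hsV, hmU, hmV⟩ := hF r hr
    refine ⟨fun α => ⇑(φ α) ⁻¹' U (e α), fun α => ⇑(φ α) ⁻¹' V (e α),
      fun α => I (e α), fun α => J (e α),
      fun α i => ⇑(φ α) ⁻¹' Us (e α) i, fun α j => ⇑(φ α) ⁻¹' Vs (e α) j,
      ?_, ?_, ?_, ?_, ?_, ?_, ?_⟩
    · intro α; rw [← Set.preimage_union, hUV, Set.preimage_univ]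
    · intro α; rw [← Set.preimage_iUnion, hU]
    · intro α; rw [← Set.preimage_iUnion, hV]
    · intro α i i' h; rw [eSetDist_preimage]; exact hsU (e α) i i' h
    · intro α j j' h; rw [eSetDist_preimage]; exact hsV (e α) j j' h
    · exact IH o (Order.lt_succ o) _ hmU _ (Equiv.sigmaCongrLeft e)
        (fun p => setPreimageIso (φ p.1) (Us (e p.1) p.2))
    · exact IH o (Order.lt_succ o) _ hmV _ (Equiv.sigmaCongrLeft e)
        (fun p => setPreimageIso (φ p.1) (Vs (e p.1) p.2))
  · rw [Dclass_limit _ hlim] at hF ⊢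
    obtain ⟨o', ho', hF⟩ := hF
    exact ⟨o', ho', IH o' ho' F hF G e φ⟩

/-- `Dclass` is monotone. -/
theorem Dclass_mono : ∀ γ : Ordinal.{u}, ∀ β ≤ γ, Dclass.{u} β ⊆ Dclass.{u} γ := by
  intro γ
  induction γ using Ordinal.induction with
  | _ γ IH =>
  intro β hβ F hF
  rcases Ordinal.zero_or_succ_or_isSuccLimit γ with rfl | ⟨o, rfl⟩ | hlim
  · rwa [nonpos_iff_eq_zero.mp hβ] at hF
  · rcases hβ.lt_or_eq with h | rfl
    · have hβo : β ≤ o := Order.lt_succ_iff.mp h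
      have hFo : F ∈ Dclass o := IH o (Order.lt_succ o) β hβo hF
      rw [Dclass_succ]
      intro r hr
      refine ⟨fun _ => Set.univ, fun _ => ∅,
        fun _ => PUnit.{u+1}, fun _ => PEmpty.{u+1},
        fun α _ => Set.univ, fun α _ => (∅ : Set (F.carrier α)),
        ?_, ?_, ?_, ?_, ?_, ?_, ?_⟩
      · intro α; simp
      · intro α; exact Set.iUnion_const _
      · intro α; exact Set.iUnion_of_empty _
      · intro α i i' h; exact absurd (Subsingleton.elim i i') h
      · intro α j; exact j.elim
      · exact Dclass_congr o F hFo _ (Equiv.sigmaPUnit F.ι)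
          (fun p => univIso (F.carrier p.1))
      · have h0 : (MetricFamily.mk ((α : F.ι) × PEmpty.{u+1})
            (fun p => ↥((fun (α : F.ι) (_ : PEmpty.{u+1}) => (∅ : Set (F.carrier α))) p.1 p.2)))
            ∈ Dclass.{u} 0 := by
          rw [Dclass_zero]
          exact ⟨1, ENNReal.one_ne_top, fun i => i.2.elim⟩
        exact IH o (Order.lt_succ o) 0 (zero_le (a := o)) h0
    · exact hF
  · rcases hβ.lt_or_eq with h | rfl
    · rw [Dclass_limit _ hlim]
      exact ⟨β, h, hF⟩
    · exact hF

/-- Closure of `Dclass γ` under unions, as a universally quantified statement. -/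
theorem Dclass_union_mem : ∀ γ : Ordinal.{u}, ∀ F G : MetricFamily.{u},
    F ∈ Dclass γ → G ∈ Dclass γ → F.union G ∈ Dclass γ := by
  intro γ
  induction γ using Ordinal.induction with
  | _ γ IH =>
  intro F G hF hG
  rcases Ordinal.zero_or_succ_or_isSuccLimit γ with rfl | ⟨o, rfl⟩ | hlim
  · rw [Dclass_zero] at hF hG ⊢
    obtain ⟨R, hR, hd⟩ := hF
    obtain ⟨R', hR', hd'⟩ := hG
    refine ⟨R + R', ENNReal.add_ne_top.mpr ⟨hR, hR'⟩, fun i => ?_⟩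
    cases i with
    | inl a => exact lt_of_lt_of_le (hd a) le_self_add
    | inr b => exact lt_of_lt_of_le (hd' b) le_add_self
  · rw [Dclass_succ] at hF hG ⊢
    intro r hr
    obtain ⟨UF, VF, IF, JF, UsF, VsF, hUVF, hUF, hVF, hsUF, hsVF, hmUF, hmVF⟩ := hF r hr
    obtain ⟨UG, VG, IG, JG, UsG, VsG, hUVG, hUG, hVG, hsUG, hsVG, hmUG, hmVG⟩ := hG r hr
    refine ⟨fun α => match α with | .inl a => UF a | .inr b => UG b,
      fun α => match α with | .inl a => VF a | .inr b => VG b,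
      fun α => match α with | .inl a => IF a | .inr b => IG b,
      fun α => match α with | .inl a => JF a | .inr b => JG b,
      fun α => match α with | .inl a => UsF a | .inr b => UsG b,
      fun α => match α with | .inl a => VsF a | .inr b => VsG b,
      ?_, ?_, ?_, ?_, ?_, ?_, ?_⟩
    · intro α; cases α with
      | inl a => exact hUVF a
      | inr b => exact hUVG b
    · intro α; cases α with
      | inl a => exact hUF a
      | inr b => exact hUG b
    · intro α; cases α with
      | inl a => exact hVF a
      | inr b => exact hVG b
    · intro α; cases α with
      | inl a => exact hsUF a
      | inr b => exact hsUG b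
    · intro α; cases α with
      | inl a => exact hsVF a
      | inr b => exact hsVG b
    · refine Dclass_congr o _ (IH o (Order.lt_succ o) _ _ hmUF hmUG) _
        (sumSigmaEquiv _) (fun p => ?_)
      rcases p with ⟨s, i⟩
      cases s with
      | inl a => exact IsometryEquiv.refl _
      | inr b => exact IsometryEquiv.refl _
    · refine Dclass_congr o _ (IH o (Order.lt_succ o) _ _ hmVF hmVG) _
        (sumSigmaEquiv _) (fun p => ?_)
      rcases p with ⟨s, i⟩
      cases s with
      | inl a => exact IsometryEquiv.refl _
      | inr b => exact IsometryEquiv.refl _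
  · rw [Dclass_limit _ hlim] at hF hG ⊢
    obtain ⟨o1, ho1, hF⟩ := hF
    obtain ⟨o2, ho2, hG⟩ := hG
    refine ⟨max o1 o2, max_lt ho1 ho2, ?_⟩
    exact IH _ (max_lt ho1 ho2) F G (Dclass_mono _ _ (le_max_left o1 o2) hF)
      (Dclass_mono _ _ (le_max_right o1 o2) hG)

end Paper

/-- **Statement 12.** Each class `𝔇_γ` is closed under (finite) unions of metric
families. -/
theorem statement12 (γ : Ordinal.{u}) (F G : MetricFamily.{u})
    (hF : F ∈ Dclass γ) (hG : G ∈ Dclass γ) :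
    F.union G ∈ Dclass γ :=
  Dclass_union_mem γ F G hF hG
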